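/- The fundamental group of L⁰(Ω,S) (endowed with the topology of convergence in probability) is trivial, for any complete separable metric space S and complete nonatomic probability space Ω; i.e., every loop in L⁰(Ω,S) is null-homotopic. -/

import Mathlib

/-!
A nonatomic probability space carries a monotone family of measurable sets `A s`, `s ∈ [0,1]`,
with `A 0 = ∅`, `A 1 = univ` and `P (A s) = s`: refine nested dyadic chains, filling each gap
by the intermediate value property of nonatomic measures (proved by greedy exhaustion), and take
the union over the levels. The loop then contracts through `H s t = γ 0` on `A s` and `γ t` off
`A s`: the Ky Fan distance from `H s t` to `H s' t'` is at most `d(γ t, γ t') + |s - s'|`, and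
`H s 0 = H s 1 = γ 0` because `γ 1 = γ 0`.
-/

open MeasureTheory Filter Topology Set
open scoped ENNReal NNReal

/-- The Ky Fan distance between two `S`-valued random variables on `(Ω, P)`:
`inf {ε > 0 : P{ω : d(X ω, Y ω) ≥ ε} ≤ ε}`. -/
noncomputable def kyFanDist {Ω S : Type*} [MeasurableSpace Ω] [PseudoMetricSpace S]
    (P : Measure Ω) (X Y : Ω → S) : ℝ :=
  sInf {ε : ℝ | 0 < ε ∧ (P {ω | ε ≤ dist (X ω) (Y ω)}).toReal ≤ ε}

/-- A measure is nonatomic if every set of positive measure contains a measurable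
subset of strictly smaller positive measure. -/
def Nonatomic {Ω : Type*} [MeasurableSpace Ω] (P : Measure Ω) : Prop :=
  ∀ A : Set Ω, MeasurableSet A → 0 < P A →
    ∃ B ⊆ A, MeasurableSet B ∧ 0 < P B ∧ P B < P A

/-- A finitely supported measure: a finite convex combination of Dirac measures. -/
def FinitelySupported {S : Type*} [MeasurableSpace S] (μ : Measure S) : Prop :=
  ∃ (n : ℕ) (c : Fin n → ℝ≥0∞) (a : Fin n → S),
    (∑ i, c i) = 1 ∧ μ = ∑ i, c i • Measure.dirac (a i)

/-- Continuity of a path of random variables with respect to the Ky Fan metric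
(equivalently, the topology of convergence in probability). -/
def KyFanContinuousOn {Ω S : Type*} [MeasurableSpace Ω] [PseudoMetricSpace S]
    (P : Measure Ω) (γ : ℝ → Ω → S) (A : Set ℝ) : Prop :=
  ∀ t ∈ A, ∀ ε > 0, ∃ δ > 0, ∀ s ∈ A, |s - t| < δ → kyFanDist P (γ s) (γ t) < ε

/-- Continuity of a path of measures with respect to the Lévy–Prokhorov metric. -/
def LPContinuousOn {S : Type*} [MeasurableSpace S] [PseudoMetricSpace S]
    (α : ℝ → Measure S) (A : Set ℝ) : Prop :=
  ∀ t ∈ A, ∀ ε > 0, ∃ δ > 0, ∀ s ∈ A, |s - t| < δ → levyProkhorovDist (α s) (α t) < ε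

/-- A polygonal path in the space of measures with vertices in `V`: there is a partition
`0 = t₀ < t₁ < ⋯ < t_{n+1} = 1` and vertices `μᵢ ∈ V` such that on `[tᵢ, tᵢ₊₁]` the path
is the affine interpolation of `μᵢ` and `μᵢ₊₁`. -/
def IsPolygonalWithVertices {S : Type*} [MeasurableSpace S] (β : ℝ → Measure S)
    (V : Set (Measure S)) : Prop :=
  ∃ (n : ℕ) (t : Fin (n + 2) → ℝ) (μ : Fin (n + 2) → Measure S),
    StrictMono t ∧ t 0 = 0 ∧ t (Fin.last (n + 1)) = 1 ∧ (∀ i, μ i ∈ V) ∧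
    ∀ (i : Fin (n + 1)), ∀ s ∈ Set.Icc (t i.castSucc) (t i.succ),
      β s = ENNReal.ofReal ((t i.succ - s) / (t i.succ - t i.castSucc)) • μ i.castSucc
        + ENNReal.ofReal ((s - t i.castSucc) / (t i.succ - t i.castSucc)) • μ i.succ

open scoped symmDiff

namespace ENNReal

theorem exists_mem_forall_le_two_mul {T : Set ℝ≥0∞} (hT : T.Nonempty) (hfin : sSup T ≠ ∞) :
    ∃ x ∈ T, ∀ y ∈ T, y ≤ 2 * x := by
  by_cases h0 : sSup T = 0
  · obtain ⟨x, hx⟩ := hT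
    exact ⟨x, hx, fun y hy => (le_sSup hy).trans (h0.le.trans bot_le)⟩
  · obtain ⟨x, hx, hlt⟩ := lt_sSup_iff.1 (ENNReal.half_lt_self h0 hfin)
    refine ⟨x, hx, fun y hy => ?_⟩
    calc y ≤ sSup T := le_sSup hy
      _ = 2 * (sSup T / 2) := (ENNReal.mul_div_cancel' (by simp) (by simp)).symm
      _ ≤ 2 * x := by gcongr

end ENNReal

namespace MeasureTheory

variable {Ω : Type*} [MeasurableSpace Ω]

theorem exists_greedy_seq (μ : Measure Ω) (A : Set Ω) {c : ℝ≥0∞} (hc : c ≠ ∞) :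
    ∃ B : ℕ → Set Ω, Monotone B ∧ (∀ n, MeasurableSet (B n)) ∧ (∀ n, B n ⊆ A) ∧
      (∀ n, μ (B n) ≤ c) ∧ ∀ n, ∀ D ⊆ A \ B n, MeasurableSet D → μ (B n) + μ D ≤ c →
        2 * μ (B n) + μ D ≤ 2 * μ (B (n + 1)) := by
  -- each stage adds a set at least half as large as any set that would still fit
  let admissible (B : Set Ω) : Set (Set Ω) :=
    {D | D ⊆ A \ B ∧ MeasurableSet D ∧ μ B + μ D ≤ c}
  have hstep : ∀ B, μ B ≤ c → ∃ D ∈ admissible B, ∀ D' ∈ admissible B, μ D' ≤ 2 * μ D := by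
    intro B hB
    have hne : (μ '' admissible B).Nonempty :=
      ⟨μ ∅, ∅, ⟨empty_subset _, .empty, by simpa using hB⟩, rfl⟩
    have hbdd : sSup (μ '' admissible B) ≠ ∞ := by
      refine ne_top_of_le_ne_top hc (sSup_le ?_)
      rintro _ ⟨D, hD, rfl⟩
      exact le_add_self.trans hD.2.2
    obtain ⟨_, ⟨D, hD, rfl⟩, hmax⟩ := ENNReal.exists_mem_forall_le_two_mul hne hbdd
    exact ⟨D, hD, fun D' hD' => hmax _ ⟨D', hD', rfl⟩⟩
  choose! D hD hDmax using hstep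
  let B : ℕ → Set Ω := fun n => Nat.rec ∅ (fun _ B => B ∪ D B) n
  have hB : ∀ n, MeasurableSet (B n) ∧ B n ⊆ A ∧ μ (B n) ≤ c := by
    intro n
    induction n with
    | zero => exact ⟨.empty, empty_subset _, by simp [B]⟩
    | succ n ih =>
      obtain ⟨hsub, hmeas, hle⟩ := hD (B n) ih.2.2
      refine ⟨ih.1.union hmeas, union_subset ih.2.1 (hsub.trans sdiff_subset), ?_⟩
      exact (measure_union_le _ _).trans hle
  have hBsucc : ∀ n, μ (B (n + 1)) = μ (B n) + μ (D (B n)) := fun n =>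
    measure_union (disjoint_sdiff_right.mono_right (hD (B n) (hB n).2.2).1)
      (hD (B n) (hB n).2.2).2.1
  refine ⟨B, monotone_nat_of_le_succ fun n => subset_union_left, fun n => (hB n).1,
    fun n => (hB n).2.1, fun n => (hB n).2.2, fun n E hEA hE hEc => ?_⟩
  calc 2 * μ (B n) + μ E ≤ 2 * μ (B n) + 2 * μ (D (B n)) := by
        gcongr; exact hDmax _ (hB n).2.2 E ⟨hEA, hE, hEc⟩
    _ = 2 * μ (B (n + 1)) := by rw [hBsucc, mul_add]

end MeasureTheory

namespace Nonatomic

variable {Ω : Type*} [MeasurableSpace Ω] {μ : Measure Ω}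

theorem exists_subset_pos_two_mul_le (hna : Nonatomic μ) {A : Set Ω} (hA : MeasurableSet A)
    (hA0 : 0 < μ A) : ∃ B ⊆ A, MeasurableSet B ∧ 0 < μ B ∧ 2 * μ B ≤ μ A := by
  obtain ⟨B, hBA, hB, hB0, hBlt⟩ := hna A hA hA0
  by_cases h : 2 * μ B ≤ μ A
  · exact ⟨B, hBA, hB, hB0, h⟩
  have hsum : μ B + μ (A \ B) = μ A := by
    rw [measure_add_sdiff hB.nullMeasurableSet, union_eq_self_of_subset_left hBA]
  have hlt : μ (A \ B) < μ B :=
    (ENNReal.add_lt_add_iff_left hBlt.ne_top).1 (by rw [hsum, ← two_mul]; exact not_le.1 h)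
  refine ⟨A \ B, sdiff_subset, hA.diff hB, pos_iff_ne_zero.2 fun h0 => ?_, ?_⟩
  · rw [h0, add_zero] at hsum
    exact hBlt.ne hsum
  · calc 2 * μ (A \ B) = μ (A \ B) + μ (A \ B) := two_mul _
      _ ≤ μ B + μ (A \ B) := by gcongr
      _ = μ A := hsum

theorem exists_subset_pos_le (hna : Nonatomic μ) {A : Set Ω} (hA : MeasurableSet A)
    (hA0 : 0 < μ A) (hAfin : μ A ≠ ∞) {t : ℝ≥0∞} (ht : 0 < t) :
    ∃ B ⊆ A, MeasurableSet B ∧ 0 < μ B ∧ μ B ≤ t := by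
  have hsmall : ∀ k : ℕ, ∃ B ⊆ A, MeasurableSet B ∧ 0 < μ B ∧ 2 ^ k * μ B ≤ μ A := by
    intro k
    induction k with
    | zero => exact ⟨A, subset_rfl, hA, hA0, by simp⟩
    | succ k ih =>
      obtain ⟨B, hBA, hB, hB0, hBle⟩ := ih
      obtain ⟨C, hCB, hC, hC0, hCle⟩ := hna.exists_subset_pos_two_mul_le hB hB0
      refine ⟨C, hCB.trans hBA, hC, hC0, ?_⟩
      calc 2 ^ (k + 1) * μ C = 2 ^ k * (2 * μ C) := by ring
        _ ≤ 2 ^ k * μ B := by gcongr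
        _ ≤ μ A := hBle
  obtain ⟨k, hk⟩ := ENNReal.exists_nat_mul_gt ht.ne' hAfin
  obtain ⟨B, hBA, hB, hB0, hBle⟩ := hsmall k
  refine ⟨B, hBA, hB, hB0, ?_⟩
  have hk2 : (k : ℝ≥0∞) ≤ 2 ^ k := by exact_mod_cast Nat.lt_two_pow_self.le
  exact (lt_of_mul_lt_mul_left' (hBle.trans_lt (hk.trans_le (by gcongr)))).le

theorem exists_subset_measure_eq (hna : Nonatomic μ) {A : Set Ω} (hA : MeasurableSet A)
    (hAfin : μ A ≠ ∞) {c : ℝ≥0∞} (hc : c ≤ μ A) : ∃ B ⊆ A, MeasurableSet B ∧ μ B = c := by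
  obtain ⟨B, hmono, hBm, hBA, hBc, hgreedy⟩ :=
    exists_greedy_seq μ A (ne_top_of_le_ne_top hAfin hc)
  have hUm : MeasurableSet (⋃ n, B n) := .iUnion hBm
  have hle : μ (⋃ n, B n) ≤ c := by
    rw [hmono.measure_iUnion]
    exact iSup_le hBc
  refine ⟨⋃ n, B n, iUnion_subset hBA, hUm, hle.antisymm (not_lt.1 fun hlt => ?_)⟩
  -- a positive piece of the remainder fits into every stage, so the stages grow without bound
  have hrem : 0 < μ (A \ ⋃ n, B n) :=
    (tsub_pos_of_lt hlt).trans_le ((tsub_le_tsub_right hc _).trans le_measure_sdiff)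
  obtain ⟨E, hEA, hE, hE0, hEc⟩ := hna.exists_subset_pos_le (hA.diff hUm) hrem
    (ne_top_of_le_ne_top hAfin (measure_mono sdiff_subset)) (tsub_pos_of_lt hlt)
  have hgrow : ∀ n : ℕ, n * μ E ≤ 2 * μ (B n) := by
    intro n
    induction n with
    | zero => simp
    | succ n ih =>
      have hfit : μ (B n) + μ E ≤ c :=
        calc μ (B n) + μ E ≤ μ (⋃ n, B n) + (c - μ (⋃ n, B n)) :=
              add_le_add (measure_mono (subset_iUnion B n)) hEc
          _ = c := add_tsub_cancel_of_le hle
      calc ((n + 1 : ℕ) : ℝ≥0∞) * μ E = n * μ E + μ E := by push_cast; ring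
        _ ≤ 2 * μ (B n) + μ E := by gcongr
        _ ≤ 2 * μ (B (n + 1)) :=
          hgreedy n E (hEA.trans (sdiff_subset_sdiff_right (subset_iUnion B n))) hE hfit
  have h2c : 2 * c ≠ ∞ := ENNReal.mul_ne_top (by simp) (ne_top_of_le_ne_top hAfin hc)
  obtain ⟨n, hn⟩ := ENNReal.exists_nat_mul_gt hE0.ne' h2c
  exact ((hgrow n).trans (by gcongr; exact hBc n)).not_gt hn

theorem exists_between_measureReal_eq [IsFiniteMeasure μ] (hna : Nonatomic μ) {B C : Set Ω}
    (hB : MeasurableSet B) (hC : MeasurableSet C) (hBC : B ⊆ C) {c : ℝ} (hBc : μ.real B ≤ c)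
    (hcC : c ≤ μ.real C) : ∃ D, MeasurableSet D ∧ B ⊆ D ∧ D ⊆ C ∧ μ.real D = c := by
  have hle : ENNReal.ofReal (c - μ.real B) ≤ μ (C \ B) := by
    rw [← ofReal_measureReal, measureReal_sdiff hBC hB]
    exact ENNReal.ofReal_le_ofReal (by linarith)
  obtain ⟨E, hEC, hE, hEμ⟩ := hna.exists_subset_measure_eq (hC.diff hB) (measure_ne_top _ _) hle
  refine ⟨B ∪ E, hB.union hE, subset_union_left, union_subset hBC (hEC.trans sdiff_subset), ?_⟩
  have hEreal : μ.real E = c - μ.real B := by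
    rw [measureReal_def, hEμ, ENNReal.toReal_ofReal (sub_nonneg.2 hBc)]
  rw [measureReal_union (disjoint_sdiff_right.mono_right hEC) hE, hEreal]
  ring

end Nonatomic

structure IsDyadicChain {Ω : Type*} [MeasurableSpace Ω] (μ : Measure Ω) (n : ℕ)
    (G : ℕ → Set Ω) : Prop where
  measurableSet : ∀ k, MeasurableSet (G k)
  monotone : Monotone G
  zero : G 0 = ∅
  eq_univ : ∀ k, 2 ^ n ≤ k → G k = univ
  measureReal_eq : ∀ k ≤ 2 ^ n, μ.real (G k) = k / 2 ^ n

section DyadicChain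

variable {Ω : Type*} [MeasurableSpace Ω] {μ : Measure Ω}

theorem isDyadicChain_zero [IsProbabilityMeasure μ] :
    IsDyadicChain μ 0 fun k => if k = 0 then ∅ else univ where
  measurableSet k := by split_ifs <;> simp
  monotone := monotone_nat_of_le_succ fun k => by split_ifs <;> simp_all
  zero := if_pos rfl
  eq_univ k hk := if_neg (by omega)
  measureReal_eq k hk := by interval_cases k <;> simp

theorem IsDyadicChain.exists_refine [IsFiniteMeasure μ] (hna : Nonatomic μ) {n : ℕ}
    {G : ℕ → Set Ω} (hG : IsDyadicChain μ n G) :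
    ∃ G' : ℕ → Set Ω, IsDyadicChain μ (n + 1) G' ∧ ∀ k, G' (2 * k) = G k := by
  have hmid : ∀ k, ∃ D, MeasurableSet D ∧ G k ⊆ D ∧ D ⊆ G (k + 1) ∧
      (k < 2 ^ n → μ.real D = (2 * k + 1) / 2 ^ (n + 1)) := by
    intro k
    by_cases hk : k < 2 ^ n
    · have h2n : (0 : ℝ) < 2 ^ n := by positivity
      have hGk := hG.measureReal_eq k hk.le
      have hGk' := hG.measureReal_eq (k + 1) hk
      obtain ⟨D, hD, hGD, hDG, hDμ⟩ := hna.exists_between_measureReal_eq (hG.measurableSet k)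
        (hG.measurableSet (k + 1)) (hG.monotone k.le_succ)
        (c := (2 * k + 1) / 2 ^ (n + 1))
        (by rw [hGk, pow_succ, div_le_div_iff₀ (by positivity) (by positivity)]; nlinarith)
        (by
          rw [hGk', pow_succ, div_le_div_iff₀ (by positivity) (by positivity)]
          push_cast
          nlinarith)
      exact ⟨D, hD, hGD, hDG, fun _ => hDμ⟩
    · exact ⟨G k, hG.measurableSet k, subset_rfl, hG.monotone k.le_succ, fun h => absurd h hk⟩
  choose D hD hGD hDG hDμ using hmid
  let G' : ℕ → Set Ω := fun j => if j % 2 = 0 then G (j / 2) else D (j / 2)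
  have hG'even : ∀ k, G' (2 * k) = G k := fun k => by simp [G']
  have hG'odd : ∀ k, G' (2 * k + 1) = D k := fun k => by
    simp only [G']; rw [if_neg (by omega), show (2 * k + 1) / 2 = k by omega]
  refine ⟨G', ⟨fun j => ?_, monotone_nat_of_le_succ fun j => ?_, hG'even 0 ▸ hG.zero,
    fun j hj => ?_, fun j hj => ?_⟩, hG'even⟩
  all_goals obtain ⟨k, rfl | rfl⟩ := Nat.even_or_odd' j
  · exact hG'even k ▸ hG.measurableSet k
  · exact hG'odd k ▸ hD k
  · rw [hG'even, hG'odd]; exact hGD k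
  · rw [hG'odd, show 2 * k + 1 + 1 = 2 * (k + 1) by ring, hG'even]; exact hDG k
  · rw [hG'even]; exact hG.eq_univ k (by rw [pow_succ] at hj; omega)
  · rw [hG'odd]
    exact eq_univ_of_univ_subset (hG.eq_univ k (by rw [pow_succ] at hj; omega) ▸ hGD k)
  · rw [hG'even, hG.measureReal_eq k (by rw [pow_succ] at hj; omega), pow_succ]
    push_cast
    field_simp
  · rw [hG'odd, hDμ k (by rw [pow_succ] at hj; omega)]
    push_cast; ring

end DyadicChain

namespace Nonatomic

variable {Ω : Type*} [MeasurableSpace Ω] {μ : Measure Ω} [IsProbabilityMeasure μ]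

theorem exists_isDyadicChain_seq (hna : Nonatomic μ) :
    ∃ G : ℕ → ℕ → Set Ω, (∀ n, IsDyadicChain μ n (G n)) ∧ ∀ n k, G (n + 1) (2 * k) = G n k := by
  choose! refine hrefine hrefine_even using
    fun n (G : ℕ → Set Ω) (hG : IsDyadicChain μ n G) => hG.exists_refine hna
  let G : ℕ → ℕ → Set Ω := fun n => Nat.rec (fun k => if k = 0 then ∅ else univ) refine n
  have hG : ∀ n, IsDyadicChain μ n (G n) := by
    intro n
    induction n with
    | zero => exact isDyadicChain_zero
    | succ n ih => exact hrefine n _ ih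
  exact ⟨G, hG, fun n => hrefine_even n _ (hG n)⟩

theorem exists_monotone_measureReal_eq (hna : Nonatomic μ) :
    ∃ A : ℝ → Set Ω, (∀ s, MeasurableSet (A s)) ∧ Monotone A ∧ A 0 = ∅ ∧ A 1 = univ ∧
      ∀ s ∈ Icc (0 : ℝ) 1, μ.real (A s) = s := by
  obtain ⟨G, hG, hG_even⟩ := hna.exists_isDyadicChain_seq
  let approx (s : ℝ) (n : ℕ) : Set Ω := G n ⌊s * 2 ^ n⌋₊
  have happrox_mono : ∀ s : ℝ, 0 ≤ s → Monotone (approx s) := fun s hs =>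
    monotone_nat_of_le_succ fun n => by
      change G n _ ⊆ G (n + 1) _
      rw [← hG_even]
      refine (hG (n + 1)).monotone (Nat.le_floor ?_)
      have := Nat.floor_le (mul_nonneg hs (pow_nonneg zero_le_two n))
      push_cast
      rw [pow_succ]
      linarith
  refine ⟨fun s => ⋃ n, approx s n, fun s => .iUnion fun n => (hG n).measurableSet _,
    fun a b hab => iUnion_mono fun n => (hG n).monotone (Nat.floor_le_floor (by gcongr)),
    by simp [approx, (hG _).zero], eq_univ_of_univ_subset ?_, fun s hs => ?_⟩
  · exact (hG 0).eq_univ 1 le_rfl ▸ subset_iUnion_of_subset 0 (by simp [approx])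
  have hlevel : ∀ n, μ.real (approx s n) = ⌊s * 2 ^ n⌋₊ / 2 ^ n := by
    intro n
    have h2n : (0 : ℝ) < 2 ^ n := by positivity
    exact (hG n).measureReal_eq _ (Nat.floor_le_of_le (by push_cast; nlinarith [hs.2]))
  have hlim : Tendsto (fun n => μ.real (approx s n)) atTop (𝓝 s) := by
    simp_rw [hlevel]
    exact (tendsto_nat_floor_mul_div_atTop hs.1).comp
      (tendsto_pow_atTop_atTop_of_one_lt (one_lt_two : (1 : ℝ) < 2))
  have hunion : Tendsto (fun n => μ.real (approx s n)) atTop (𝓝 (μ.real (⋃ n, approx s n))) :=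
    (ENNReal.tendsto_toReal (measure_ne_top _ _)).comp
      (tendsto_measure_iUnion_atTop (happrox_mono s hs.1))
  exact tendsto_nhds_unique hunion hlim

end Nonatomic

theorem Monotone.measureReal_symmDiff {Ω ι : Type*} [MeasurableSpace Ω] [LinearOrder ι]
    {μ : Measure Ω} [IsFiniteMeasure μ] {A : ι → Set Ω} (hA : Monotone A)
    (hAm : ∀ i, MeasurableSet (A i)) (i j : ι) :
    μ.real (A i ∆ A j) = |μ.real (A i) - μ.real (A j)| := by
  wlog hij : i ≤ j generalizing i j
  · rw [symmDiff_comm, abs_sub_comm]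
    exact this j i (le_of_not_ge hij)
  rw [symmDiff_of_le (hA hij), measureReal_sdiff (hA hij) (hAm i), abs_sub_comm,
    abs_of_nonneg (sub_nonneg.2 (measureReal_mono (hA hij)))]

section KyFan

variable {Ω S : Type*} [MeasurableSpace Ω] [PseudoMetricSpace S] {P : Measure Ω} {X Y : Ω → S}

theorem kyFanDist_le_of_measureReal_le {η : ℝ} (hη : 0 < η)
    (h : P.real {ω | η ≤ dist (X ω) (Y ω)} ≤ η) : kyFanDist P X Y ≤ η :=
  csInf_le ⟨0, fun _ hx => hx.1.le⟩ ⟨hη, h⟩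

theorem exists_measureReal_le_of_kyFanDist_lt [IsFiniteMeasure P] {ε : ℝ}
    (h : kyFanDist P X Y < ε) :
    ∃ η, 0 < η ∧ η < ε ∧ P.real {ω | η ≤ dist (X ω) (Y ω)} ≤ η := by
  have hne : {η : ℝ | 0 < η ∧ P.real {ω | η ≤ dist (X ω) (Y ω)} ≤ η}.Nonempty :=
    ⟨P.real univ + 1, by positivity,
      (measureReal_mono (subset_univ _)).trans (le_add_of_nonneg_right zero_le_one)⟩
  obtain ⟨η, ⟨hη, hηP⟩, hηε⟩ := exists_lt_of_csInf_lt hne h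
  exact ⟨η, hη, hηε, hηP⟩

theorem kyFanDist_piecewise_lt [IsFiniteMeasure P] {Z : Ω → S} {A B : Set Ω}
    [∀ ω, Decidable (ω ∈ A)] [∀ ω, Decidable (ω ∈ B)] {ε δ : ℝ}
    (h : kyFanDist P X Y < ε) (hAB : P.real (A ∆ B) ≤ δ) :
    kyFanDist P (A.piecewise Z X) (B.piecewise Z Y) < ε + δ := by
  obtain ⟨η, hη, hηε, hηP⟩ := exists_measureReal_le_of_kyFanDist_lt h
  have hδ : 0 ≤ δ := measureReal_nonneg.trans hAB
  have hsub : {ω | η + δ ≤ dist (A.piecewise Z X ω) (B.piecewise Z Y ω)} ⊆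
      A ∆ B ∪ {ω | η ≤ dist (X ω) (Y ω)} := by
    intro ω hω
    by_cases hA : ω ∈ A <;> by_cases hB : ω ∈ B <;>
      simp_all [Set.mem_symmDiff] <;> linarith
  refine (kyFanDist_le_of_measureReal_le (η := η + δ) (by positivity) ?_).trans_lt (by linarith)
  calc P.real {ω | η + δ ≤ dist (A.piecewise Z X ω) (B.piecewise Z Y ω)}
      ≤ P.real (A ∆ B) + P.real {ω | η ≤ dist (X ω) (Y ω)} :=
        (measureReal_mono hsub).trans (measureReal_union_le _ _)
    _ ≤ η + δ := by linarith

end KyFan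

theorem stmt17_general {Ω S : Type*} [MeasurableSpace Ω] [MeasurableSpace S] [MetricSpace S]
    (P : Measure Ω) [IsProbabilityMeasure P] (hna : Nonatomic P)
    (γ : ℝ → Ω → S)
    (hmeas : ∀ t ∈ Set.Icc (0 : ℝ) 1, Measurable (γ t))
    (hcont : KyFanContinuousOn P γ (Set.Icc 0 1))
    (hloop : γ 1 = γ 0) :
    ∃ H : ℝ → ℝ → Ω → S,
      (∀ s ∈ Set.Icc (0 : ℝ) 1, ∀ t ∈ Set.Icc (0 : ℝ) 1, Measurable (H s t)) ∧
      -- joint continuity of the homotopy in the Ky Fan metric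
      (∀ s ∈ Set.Icc (0 : ℝ) 1, ∀ t ∈ Set.Icc (0 : ℝ) 1, ∀ ε > (0 : ℝ), ∃ δ > (0 : ℝ),
        ∀ s' ∈ Set.Icc (0 : ℝ) 1, ∀ t' ∈ Set.Icc (0 : ℝ) 1,
          |s' - s| < δ → |t' - t| < δ → kyFanDist P (H s' t') (H s t) < ε) ∧
      (∀ t ∈ Set.Icc (0 : ℝ) 1, H 0 t = γ t) ∧
      (∀ t ∈ Set.Icc (0 : ℝ) 1, H 1 t = γ 0) ∧
      (∀ s ∈ Set.Icc (0 : ℝ) 1, H s 0 = γ 0 ∧ H s 1 = γ 0) := by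
  classical
  obtain ⟨A, hAm, hAmono, hA0, hA1, hAP⟩ := hna.exists_monotone_measureReal_eq
  refine ⟨fun s t => (A s).piecewise (γ 0) (γ t),
    fun s _ t ht => Measurable.piecewise (hAm s) (hmeas 0 ⟨le_rfl, zero_le_one⟩) (hmeas t ht), ?_,
    fun t _ => funext fun ω => by simp [Set.piecewise, hA0],
    fun t _ => funext fun ω => by simp [Set.piecewise, hA1],
    fun s _ => by simp [hloop]⟩
  intro s hs t ht ε hε
  obtain ⟨δ, hδ, hγ⟩ := hcont t ht (ε / 2) (half_pos hε)
  refine ⟨min δ (ε / 2), lt_min hδ (half_pos hε), fun s' hs' t' ht' hss' htt' => ?_⟩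
  have hA : P.real (A s' ∆ A s) = |s' - s| := by
    rw [hAmono.measureReal_symmDiff hAm, hAP s' hs', hAP s hs]
  calc kyFanDist P ((A s').piecewise (γ 0) (γ t')) ((A s).piecewise (γ 0) (γ t))
      < ε / 2 + |s' - s| :=
        kyFanDist_piecewise_lt (hγ t' ht' (htt'.trans_le (min_le_left _ _))) hA.le
    _ < ε := by linarith [hss'.trans_le (min_le_right δ (ε / 2))]

/-- Every loop in `L⁰(Ω,S)` (topology of convergence in probability) is null-homotopic:
there is a Ky Fan continuous homotopy, fixing the base point, from the loop to the
constant loop. In particular the fundamental group of `L⁰(Ω,S)` is trivial. -/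
theorem stmt17 {Ω S : Type*} [MeasurableSpace Ω] [MeasurableSpace S] [MetricSpace S]
    [BorelSpace S] [CompleteSpace S] [TopologicalSpace.SeparableSpace S]
    (P : Measure Ω) [IsProbabilityMeasure P] (hna : Nonatomic P)
    (γ : ℝ → Ω → S)
    (hmeas : ∀ t ∈ Set.Icc (0 : ℝ) 1, Measurable (γ t))
    (hcont : KyFanContinuousOn P γ (Set.Icc 0 1))
    (hloop : γ 1 = γ 0) :
    ∃ H : ℝ → ℝ → Ω → S,
      (∀ s ∈ Set.Icc (0 : ℝ) 1, ∀ t ∈ Set.Icc (0 : ℝ) 1, Measurable (H s t)) ∧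
      -- joint continuity of the homotopy in the Ky Fan metric
      (∀ s ∈ Set.Icc (0 : ℝ) 1, ∀ t ∈ Set.Icc (0 : ℝ) 1, ∀ ε > (0 : ℝ), ∃ δ > (0 : ℝ),
        ∀ s' ∈ Set.Icc (0 : ℝ) 1, ∀ t' ∈ Set.Icc (0 : ℝ) 1,
          |s' - s| < δ → |t' - t| < δ → kyFanDist P (H s' t') (H s t) < ε) ∧
      (∀ t ∈ Set.Icc (0 : ℝ) 1, H 0 t = γ t) ∧
      (∀ t ∈ Set.Icc (0 : ℝ) 1, H 1 t = γ 0) ∧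
      (∀ s ∈ Set.Icc (0 : ℝ) 1, H s 0 = γ 0 ∧ H s 1 = γ 0) :=
  stmt17_general P hna γ hmeas hcont hloop
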